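/- arXiv:0811.0191 — 5 statements merged into one kernel-verified Lean document; each statement's English description precedes it below -/
import Mathlib

section
/- Let (Q, ρ) be the quiver with relations associated to a finite stratification S of a topological space X: vertices are the strata, there is an arrow S → T iff S ⊂ closure(T) and S ≠ T, and all parallel paths are identified by relations. Then the category of sheaves of R-modules on the finite topological space S (with the quotient topology from p : X → S) is equivalent to the category Rep(Q, ρ) of representations of (Q, ρ) in R-modules, and this equivalence restricts to an equivalence between sheaves with finitely generated stalks and representations with finitely generated stalks. -/
/-!
A finite space is Alexandrov-discrete, so its topology is the upper-set topology of the order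
`s ≤ t ↔ s ∈ closure {t}` and every point `x` has a smallest open neighbourhood, its open star
`Ici x`. The open stars, with the trivial topology, form a dense subsite of the open sets, so
sheaves are presheaves on the open stars, i.e. functors on the preorder. Being the smallest
neighbourhood of `x`, the open star computes the stalk at `x`.
-/

open CategoryTheory CategoryTheory.Limits TopologicalSpace

universe u v

lemma Topology.IsUpperSet.of_specializes_iff_le {X : Type*} [TopologicalSpace X]
    [AlexandrovDiscrete X] [Preorder X] (h : ∀ x y : X, x ⤳ y ↔ y ≤ x) :
    Topology.IsUpperSet X := by
  refine Topology.isUpperSet_iff_nhds.2 fun x => ?_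
  rw [← principal_nhdsKer_singleton]
  congr 1
  ext y
  exact mem_nhdsKer_singleton.trans (h y x)

namespace Alexandrov

variable (X : Type v) [TopologicalSpace X] [Preorder X] [Topology.IsUpperSet X]

instance : (principals X).leftOp.Full where
  map_surjective f := ⟨(homOfLE ((principalOpen_le_iff _).1 f.le)).op, rfl⟩

instance : (principals X).leftOp.Faithful where
  map_injective _ := Quiver.Hom.unop_inj (Subsingleton.elim _ _)

instance : (principals X).leftOp.IsDenseSubsite ⊥ (Opens.grothendieckTopology (TopCat.of X)) where
  isCoverDense' := ⟨fun U x hx =>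
    ⟨principalOpen x, homOfLE ((principalOpen_le_iff U).2 hx),
      Presieve.in_coverByImage _ (Y := Opposite.op x) _, self_mem_principalOpen x⟩⟩
  functorPushforward_mem_iff := by
    intro x T
    rw [GrothendieckTopology.bot_covering]
    constructor
    · intro h
      -- a cover of `principalOpen x` must contain `principalOpen y` with `x ∈ principalOpen y`,
      -- which makes the arrow `y ⟶ x` of `T` invertible
      obtain ⟨V, -, ⟨y, g, i, hg, -⟩, hx⟩ := h x.unop (self_mem_principalOpen _)
      have hyx : y.unop ≤ x.unop := i.le hx
      have hid : (homOfLE hyx).op ≫ g = 𝟙 x := Quiver.Hom.unop_inj (Subsingleton.elim _ _)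
      rw [← Sieve.id_mem_iff_eq_top, ← hid]
      exact T.downward_closed hg _
    · rintro rfl y hy
      exact ⟨_, 𝟙 _, ⟨x, 𝟙 _, 𝟙 _, trivial, rfl⟩, hy⟩

variable (A : Type u) [Category.{v} A]

noncomputable def sheafEquivFunctor [HasLimits A] :
    Sheaf (Opens.grothendieckTopology (TopCat.of X)) A ≌ (X ⥤ A) :=
  (Functor.IsDenseSubsite.sheafEquiv ⊥ _ (principals X).leftOp A).symm.trans
    ((sheafBotEquivalence A).trans (opOpEquivalence X).congrLeft)

variable {X A}

noncomputable def stalkIsoObjPrincipalOpen [HasColimits A] (F : TopCat.Presheaf A (TopCat.of X))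
    (x : X) : F.stalk x ≅ F.obj (.op (principalOpen x)) :=
  let isInitial : IsInitial
      (⟨principalOpen x, self_mem_principalOpen x⟩ : OpenNhds (X := TopCat.of X) x) :=
    IsInitial.ofUniqueHom (fun U => homOfLE ((principalOpen_le_iff _).2 U.2))
      (fun _ _ => Subsingleton.elim _ _)
  colimit.isoColimitCocone ⟨_, colimitOfDiagramTerminal (terminalOpOfInitial isInitial)
    ((OpenNhds.inclusion (X := TopCat.of X) x).op ⋙ F)⟩

noncomputable def sheafEquivFunctorObjIsoStalk [HasLimits A] [HasColimits A]
    (F : Sheaf (Opens.grothendieckTopology (TopCat.of X)) A) (x : X) :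
    ((sheafEquivFunctor X A).functor.obj F).obj x ≅ TopCat.Presheaf.stalk F.obj x :=
  (stalkIsoObjPrincipalOpen F.obj x).symm

end Alexandrov

open Alexandrov in
theorem formality_spheres_stmt4_general (R : Type) [CommRing R]
    (X : Type) (S : Type) [Finite S]
    [tS : TopologicalSpace S]
    [Preorder S] (horder : ∀ s t : S, s ≤ t ↔ s ∈ closure ({t} : Set S)) :
    ∃ e : Sheaf (Opens.grothendieckTopology (TopCat.of S)) (ModuleCat.{0} R) ≌
        (S ⥤ ModuleCat.{0} R),
      -- the functor sends a sheaf to the representation formed by its stalks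
      (∀ (F : Sheaf (Opens.grothendieckTopology (TopCat.of S)) (ModuleCat.{0} R)) (x : S),
        Nonempty ((e.functor.obj F).obj x ≅
          TopCat.Presheaf.stalk (C := ModuleCat.{0} R) (X := TopCat.of S) F.val x)) ∧
      -- it restricts to the subcategories with finitely generated stalks
      (∀ F : Sheaf (Opens.grothendieckTopology (TopCat.of S)) (ModuleCat.{0} R),
        (∀ x : S, Module.Finite R (TopCat.Presheaf.stalk (C := ModuleCat.{0} R) (X := TopCat.of S) F.val x)) ↔
        (∀ x : S, Module.Finite R ((e.functor.obj F).obj x))) := by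
  have : Topology.IsUpperSet S := .of_specializes_iff_le fun s t =>
    specializes_iff_mem_closure.trans (horder t s).symm
  refine ⟨sheafEquivFunctor S (ModuleCat.{0} R),
    fun F x => ⟨sheafEquivFunctorObjIsoStalk F x⟩, fun F => forall_congr' fun x => ?_⟩
  exact (Module.Finite.equiv_iff (sheafEquivFunctorObjIsoStalk F x).toLinearEquiv).symm

/-- Let `(Q, ρ)` be the quiver with relations associated to a finite
stratification of `X` with stratum set `S`: vertices are the strata, there is an arrow
`s → t` iff `s ⊂ closure t`, and all parallel paths are identified by relations.  Since all
parallel paths are identified, `Rep(Q, ρ)` is the category of functors from the preorder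
`s ≤ t ↔ s ∈ closure {t}` on `S` to `R`-modules.  Then the category of sheaves of
`R`-modules on the finite topological space `S` (with the quotient topology from
`p : X → S`) is equivalent to `Rep(Q, ρ)`, the equivalence sending a sheaf to the
representation of its stalks (= sections over the open stars); in particular it restricts
to an equivalence between sheaves with finitely generated stalks and representations with
finitely generated stalks. -/
theorem formality_spheres_stmt4 (R : Type) [CommRing R] [IsNoetherianRing R]
    (X : Type) [TopologicalSpace X] (S : Type) [Finite S]
    (p : X → S) (hsurj : Function.Surjective p)
    [tS : TopologicalSpace S] (htS : tS = TopologicalSpace.coinduced p ‹_›)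
    [Preorder S] (horder : ∀ s t : S, s ≤ t ↔ s ∈ closure ({t} : Set S)) :
    ∃ e : Sheaf (Opens.grothendieckTopology (TopCat.of S)) (ModuleCat.{0} R) ≌
        (S ⥤ ModuleCat.{0} R),
      -- the functor sends a sheaf to the representation formed by its stalks
      (∀ (F : Sheaf (Opens.grothendieckTopology (TopCat.of S)) (ModuleCat.{0} R)) (x : S),
        Nonempty ((e.functor.obj F).obj x ≅
          TopCat.Presheaf.stalk (C := ModuleCat.{0} R) (X := TopCat.of S) F.val x)) ∧
      -- it restricts to the subcategories with finitely generated stalks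
      (∀ F : Sheaf (Opens.grothendieckTopology (TopCat.of S)) (ModuleCat.{0} R),
        (∀ x : S, Module.Finite R (TopCat.Presheaf.stalk (C := ModuleCat.{0} R) (X := TopCat.of S) F.val x)) ↔
        (∀ x : S, Module.Finite R ((e.functor.obj F).obj x))) :=
  formality_spheres_stmt4_general R X S (tS := tS) horder
end

section
/- Let A be the graded-commutative real dg algebra with basis 1 (degree 0), ω (degree n, n ≥ 2), with zero differential on the subalgebra generated by 1 and ω, together with an element τ of degree n−1 and an element ω' of degree n satisfying dτ = ω', τ·τ = 0, ω·ω = ω·ω' = ω'·ω' = 0, ω·τ = τ·ω = ω'·τ = τ·ω' = 0 (as in the algebra U of the formality proof for S^n). Then the projection A → H(A) killing τ and ω' is a quasi-isomorphism of dg algebras; hence A is formal. -/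
/-- A differential graded algebra over a commutative ring `K`. -/
structure DGA (K : Type*) [CommRing K] where
  carrier : Type*
  [ring : Ring carrier]
  [alg : Algebra K carrier]
  grade : ℤ → Submodule K carrier
  internal : DirectSum.IsInternal grade
  one_mem : (1 : carrier) ∈ grade 0
  mul_mem : ∀ {i j : ℤ} {a b : carrier}, a ∈ grade i → b ∈ grade j → a * b ∈ grade (i + j)
  d : carrier →ₗ[K] carrier
  d_mem : ∀ {i : ℤ} {a : carrier}, a ∈ grade i → d a ∈ grade (i + 1)
  d_sq : ∀ a : carrier, d (d a) = 0
  leibniz : ∀ {i : ℤ} (a b : carrier), a ∈ grade i →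
    d (a * b) = d a * b + ((i.negOnePow : ℤ) • (a * d b))

attribute [instance] DGA.ring DGA.alg

/-- A morphism of dg algebras: a `K`-algebra homomorphism compatible with the gradings and
the differentials. -/
structure DGAHom {K : Type*} [CommRing K] (A B : DGA K) where
  toHom : A.carrier →ₐ[K] B.carrier
  map_grade : ∀ {i : ℤ} {a : A.carrier}, a ∈ A.grade i → toHom a ∈ B.grade i
  map_d : ∀ a : A.carrier, toHom (A.d a) = B.d (toHom a)

/-- A morphism of dg algebras is a quasi-isomorphism if it induces a bijection on
cohomology in each degree. -/
def DGAHom.IsQIso {K : Type*} [CommRing K] {A B : DGA K} (f : DGAHom A B) : Prop :=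
  (∀ (i : ℤ), ∀ b ∈ B.grade i, B.d b = 0 →
    ∃ a ∈ A.grade i, A.d a = 0 ∧ ∃ x, f.toHom a - b = B.d x) ∧
  (∀ (i : ℤ), ∀ a ∈ A.grade i, A.d a = 0 →
    (∃ y, f.toHom a = B.d y) → ∃ x, a = A.d x)

universe u v

/-- A dg algebra is formal if it is connected to a dg algebra with trivial differential by
a chain (here: a roof) of quasi-isomorphisms of dg algebras. -/
def DGA.IsFormal {K : Type u} [CommRing K] (A : DGA.{u, v} K) : Prop :=
  ∃ (U H : DGA.{u, v} K) (f : DGAHom U A) (g : DGAHom U H),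
    H.d = 0 ∧ f.IsQIso ∧ g.IsQIso

/-!
The cohomology of `A` is `K[ε]`, with `ε` in degree `n`. The projection `π : A → K[ε]`
(`1 ↦ 1`, `ω ↦ ε`, `τ, ω' ↦ 0`) is multiplicative because every product of two basis elements
of positive degree vanishes; the one relation not assumed, `ω' ω = 0`, is the Leibniz rule
applied to `τ ω = 0`. The section `σ` (`1 ↦ 1`, `ε ↦ ω`) and the map `h` sending `ω'` to `τ` and
the other basis elements to `0` satisfy `id = σ π + d h + h d`, so `π` is a quasi-isomorphism,
and the roof `A ← A → K[ε]` shows that `A` is formal.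
-/

universe w

open DualNumber TrivSqZeroExt

namespace Module.Basis

open Submodule

section Module

variable {ι κ R M : Type*} [Ring R] [AddCommGroup M] [Module R M]
  (b : Basis ι R M) (deg : ι → κ)

def gradeBy (i : κ) : Submodule R M := span R (b '' (deg ⁻¹' {i}))

theorem mem_gradeBy (k : ι) : b k ∈ b.gradeBy deg (deg k) :=
  subset_span ⟨k, rfl, rfl⟩

theorem iSup_gradeBy : ⨆ i, b.gradeBy deg i = ⊤ :=
  eq_top_iff.mpr <| b.span_eq.symm.le.trans <| span_le.mpr <| Set.range_subset_iff.mpr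
    fun k => le_iSup (b.gradeBy deg) (deg k) (b.mem_gradeBy deg k)

theorem isInternal_gradeBy [DecidableEq κ] : DirectSum.IsInternal (b.gradeBy deg) := by
  refine DirectSum.isInternal_submodule_of_iSupIndep_of_iSup_eq_top (fun i => ?_)
    (b.iSup_gradeBy deg)
  refine Disjoint.mono_right ?_ <| b.linearIndependent.disjoint_span_image
    (s := deg ⁻¹' {i}) (t := (deg ⁻¹' {i})ᶜ) disjoint_compl_right
  exact iSup₂_le fun j hj => span_mono <| Set.image_mono fun k hk => by simp_all

theorem map_mem_gradeBy {N : Type*} [AddCommGroup N] [Module R N] (f : M →ₗ[R] N)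
    {G : κ → Submodule R N} (hf : ∀ k, f (b k) ∈ G (deg k)) {i : κ} {x : M}
    (hx : x ∈ b.gradeBy deg i) : f x ∈ G i := by
  refine (span_le.mpr ?_ : b.gradeBy deg i ≤ (G i).comap f) hx
  rintro _ ⟨k, hk, rfl⟩
  exact congrArg G hk ▸ hf k

end Module

theorem mul_mem_gradeBy {ι κ R A : Type*} [CommRing R] [Ring A] [Algebra R A] [Add κ]
    (b : Basis ι R A) (deg : ι → κ) (hmul : ∀ k l, b k * b l ∈ b.gradeBy deg (deg k + deg l))
    {i j : κ} {x y : A} (hx : x ∈ b.gradeBy deg i) (hy : y ∈ b.gradeBy deg j) :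
    x * y ∈ b.gradeBy deg (i + j) := by
  have hxy := mul_mem_mul hx hy
  rw [gradeBy, gradeBy, span_mul_span] at hxy
  refine span_le.mpr ?_ hxy
  rintro _ ⟨_, ⟨k, hk, rfl⟩, _, ⟨l, hl, rfl⟩, rfl⟩
  simp only [Set.mem_preimage, Set.mem_singleton_iff] at hk hl
  exact hk ▸ hl ▸ hmul k l

end Module.Basis

theorem DirectSum.IsInternal.eq_gradeBy {ι κ R M : Type*} [Ring R] [AddCommGroup M]
    [Module R M] [DecidableEq κ] {G : κ → Submodule R M} (hG : DirectSum.IsInternal G)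
    (b : Module.Basis ι R M) (deg : ι → κ) (hb : ∀ k, b k ∈ G (deg k)) : G = b.gradeBy deg :=
  ((hG.submodule_iSupIndep.le_iff_eq_of_iSup_eq_top (b.iSup_gradeBy deg)).mp fun i =>
    Submodule.span_le.mpr <| by rintro _ ⟨k, hk, rfl⟩; exact congrArg G hk ▸ hb k).symm

namespace DualNumber

variable (K : Type u) [CommRing K]

noncomputable def basisOneEps : Module.Basis (Fin 2) K K[ε] :=
  .mk (v := ![1, ε])
    (LinearIndependent.pair_iff.mpr fun s t h =>
      ⟨by simpa using congrArg fst h, by simpa using congrArg snd h⟩)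
    (fun x _ => Submodule.mem_span_range_iff_exists_fun K |>.mpr
      ⟨![x.fst, x.snd], by ext <;> simp⟩)

@[simp] theorem basisOneEps_zero : basisOneEps K 0 = 1 := by simp [basisOneEps]

@[simp] theorem basisOneEps_one : basisOneEps K 1 = ε := by simp [basisOneEps]

noncomputable def uliftBasis : Module.Basis (Fin 2) K (ULift.{w} K[ε]) :=
  (basisOneEps K).map ULift.moduleEquiv.symm

@[simp] theorem uliftBasis_zero : uliftBasis.{u, w} K 0 = 1 := by
  simp [uliftBasis]; rfl

@[simp] theorem uliftBasis_one : uliftBasis.{u, w} K 1 = ⟨ε⟩ := by simp [uliftBasis]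

variable {K} in
@[simp] theorem up_eps_mul_up_eps : (⟨ε⟩ : ULift.{w} K[ε]) * ⟨ε⟩ = 0 :=
  ULift.ext _ _ eps_mul_eps

end DualNumber

namespace DGA

/-- Lifted to an arbitrary universe so that it can live next to any dg algebra. An `abbrev`, so
that its instances unfold reducibly to those of `ULift` and `simp` lemmas about `ULift K[ε]`
apply to it. -/
noncomputable abbrev dualNumber (K : Type u) [CommRing K] (n : ℤ) : DGA.{u, max u w} K where
  carrier := ULift.{w} K[ε]
  grade := (uliftBasis K).gradeBy ![0, n]
  internal := (uliftBasis K).isInternal_gradeBy _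
  one_mem := uliftBasis_zero K ▸ (uliftBasis K).mem_gradeBy _ 0
  mul_mem := (uliftBasis K).mul_mem_gradeBy _ fun k l => by
    fin_cases k
    · simpa using (uliftBasis K).mem_gradeBy ![0, n] l
    fin_cases l
    · simpa using (uliftBasis K).mem_gradeBy ![0, n] 1
    · simp
  d := 0
  d_mem _ := zero_mem _
  d_sq _ := rfl
  leibniz _ _ _ := by simp

variable {K : Type*} [CommRing K] {A : DGA K}

variable (A) in
theorem d_one : A.d 1 = 0 := by
  simpa using A.leibniz 1 1 A.one_mem

theorem d_mul_eq_zero_of_mul_eq_zero {i : ℤ} {x y : A.carrier} (hx : x ∈ A.grade i)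
    (hy : A.d y = 0) (hxy : x * y = 0) : A.d x * y = 0 := by
  simpa [hxy, hy] using (A.leibniz x y hx).symm

end DGA

namespace DGAHom

variable {K : Type u} [CommRing K]

def id (A : DGA.{u, v} K) : DGAHom A A :=
  ⟨AlgHom.id K A.carrier, fun ha => ha, fun _ => rfl⟩

theorem isQIso_id (A : DGA.{u, v} K) : (id A).IsQIso :=
  ⟨fun _ a ha hda => ⟨a, ha, hda, 0, by simp [id]⟩, fun _ _ _ _ h => h⟩

theorem isQIso_of_rightInverse_of_homotopy {A B : DGA K} (f : DGAHom A B)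
    (σ : B.carrier →ₗ[K] A.carrier)
    (hσ_grade : ∀ {i : ℤ} {x : B.carrier}, x ∈ B.grade i → σ x ∈ A.grade i)
    (hσ_d : A.d ∘ₗ σ = σ ∘ₗ B.d) (hfσ : f.toHom.toLinearMap ∘ₗ σ = LinearMap.id)
    (h : A.carrier →ₗ[K] A.carrier)
    (hh : LinearMap.id = σ ∘ₗ f.toHom.toLinearMap + A.d ∘ₗ h + h ∘ₗ A.d) : f.IsQIso := by
  refine ⟨fun i x hx hdx => ⟨σ x, hσ_grade hx, ?_, 0, ?_⟩,
    fun i a _ hda ⟨y, hy⟩ => ⟨σ y + h a, ?_⟩⟩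
  · simpa [hdx] using LinearMap.congr_fun hσ_d x
  · simpa [sub_eq_zero] using LinearMap.congr_fun hfσ x
  · calc a = σ (f.toHom a) + A.d (h a) + h (A.d a) := by simpa using LinearMap.congr_fun hh a
      _ = A.d (σ y + h a) := by
        rw [hda, map_zero, add_zero, hy, map_add, ← LinearMap.comp_apply σ B.d, ← hσ_d,
          LinearMap.comp_apply]

end DGAHom

theorem DGA.isFormal_of_isQIso {K : Type u} [CommRing K] {A H : DGA.{u, v} K} (f : DGAHom A H)
    (hH : H.d = 0) (hf : f.IsQIso) : A.IsFormal :=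
  ⟨A, H, DGAHom.id A, f, hH, DGAHom.isQIso_id A, hf⟩

/-- The algebra `U` of the formality proof for `Sⁿ`, presented by its basis `1, ω, τ, ω'`. -/
structure IsSphereModel {K : Type u} [CommRing K] {A : DGA.{u, v} K} (n : ℕ)
    (b : Module.Basis (Fin 4) K A.carrier) (ω τ ω' : A.carrier) : Prop where
  basis_eq : ⇑b = ![1, ω, τ, ω']
  ω_mem : ω ∈ A.grade n
  τ_mem : τ ∈ A.grade ((n : ℤ) - 1)
  ω'_mem : ω' ∈ A.grade n
  d_ω : A.d ω = 0
  d_τ : A.d τ = ω'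
  τ_mul_τ : τ * τ = 0
  ω_mul_ω : ω * ω = 0
  ω_mul_ω' : ω * ω' = 0
  ω'_mul_ω' : ω' * ω' = 0
  ω_mul_τ : ω * τ = 0
  τ_mul_ω : τ * ω = 0
  ω'_mul_τ : ω' * τ = 0
  τ_mul_ω' : τ * ω' = 0

section SphereModel

variable {K : Type u} [CommRing K] {A : DGA.{u, v} K}

noncomputable def sphereProj (b : Module.Basis (Fin 4) K A.carrier) :
    A.carrier →ₗ[K] ULift.{w} K[ε] :=
  b.constr K ![1, ⟨ε⟩, 0, 0]

noncomputable def sphereSection (ω : A.carrier) : ULift.{w} K[ε] →ₗ[K] A.carrier :=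
  (uliftBasis K).constr K ![1, ω]

theorem sphereSection_one (ω : A.carrier) : sphereSection.{u, v, w} ω 1 = 1 := by
  rw [← uliftBasis_zero, sphereSection, Module.Basis.constr_basis]; rfl

theorem sphereSection_eps (ω : A.carrier) : sphereSection.{u, v, w} ω ⟨ε⟩ = ω := by
  rw [← uliftBasis_one, sphereSection, Module.Basis.constr_basis]; rfl

noncomputable def sphereHomotopy (b : Module.Basis (Fin 4) K A.carrier) (τ : A.carrier) :
    A.carrier →ₗ[K] A.carrier :=
  b.constr K ![0, 0, 0, τ]

namespace IsSphereModel

variable {n : ℕ} {b : Module.Basis (Fin 4) K A.carrier} {ω τ ω' : A.carrier}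
  {M : Type*} [AddCommGroup M] [Module K M]

theorem ω'_mul_ω (hU : IsSphereModel n b ω τ ω') : ω' * ω = 0 :=
  hU.d_τ ▸ DGA.d_mul_eq_zero_of_mul_eq_zero hU.τ_mem hU.d_ω hU.τ_mul_ω

theorem d_ω' (hU : IsSphereModel n b ω τ ω') : A.d ω' = 0 := hU.d_τ ▸ A.d_sq τ

theorem constr_apply (hU : IsSphereModel n b ω τ ω') (v : Fin 4 → M) (k : Fin 4) :
    b.constr K v (![1, ω, τ, ω'] k) = v k :=
  hU.basis_eq ▸ b.constr_basis K v k

theorem constr_one (hU : IsSphereModel n b ω τ ω') (v : Fin 4 → M) : b.constr K v 1 = v 0 :=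
  hU.constr_apply v 0

theorem constr_ω (hU : IsSphereModel n b ω τ ω') (v : Fin 4 → M) : b.constr K v ω = v 1 :=
  hU.constr_apply v 1

theorem constr_τ (hU : IsSphereModel n b ω τ ω') (v : Fin 4 → M) : b.constr K v τ = v 2 :=
  hU.constr_apply v 2

theorem constr_ω' (hU : IsSphereModel n b ω τ ω') (v : Fin 4 → M) : b.constr K v ω' = v 3 :=
  hU.constr_apply v 3

theorem sphereProj_mul (hU : IsSphereModel n b ω τ ω') (x y : A.carrier) :
    (sphereProj b (x * y) : ULift.{w} K[ε]) = sphereProj b x * sphereProj b y := by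
  revert x y
  rw [LinearMap.map_mul_iff]
  refine b.ext fun k => b.ext fun l => ?_
  fin_cases k <;> fin_cases l <;>
    simp [hU.basis_eq, sphereProj, hU.constr_one, hU.constr_ω, hU.constr_τ, hU.constr_ω',
      hU.τ_mul_τ, hU.ω_mul_ω, hU.ω_mul_ω', hU.ω'_mul_ω', hU.ω_mul_τ, hU.τ_mul_ω, hU.ω'_mul_τ,
      hU.τ_mul_ω', hU.ω'_mul_ω, -Module.Basis.constr_apply_fintype]

theorem grade_eq_gradeBy (hU : IsSphereModel n b ω τ ω') :
    A.grade = b.gradeBy ![0, (n : ℤ), n - 1, n] := by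
  refine A.internal.eq_gradeBy b _ fun k => ?_
  fin_cases k
  · simpa [hU.basis_eq] using A.one_mem
  · simpa [hU.basis_eq] using hU.ω_mem
  · simpa [hU.basis_eq] using hU.τ_mem
  · simpa [hU.basis_eq] using hU.ω'_mem

theorem sphereProj_mem_grade (hU : IsSphereModel n b ω τ ω') {i : ℤ} {x : A.carrier}
    (hx : x ∈ A.grade i) : (sphereProj b x : ULift.{w} K[ε]) ∈ (DGA.dualNumber K n).grade i := by
  rw [hU.grade_eq_gradeBy] at hx
  refine b.map_mem_gradeBy _ _ (fun k => ?_) hx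
  fin_cases k
  · simpa [hU.basis_eq, sphereProj, hU.constr_one, -Module.Basis.constr_apply_fintype]
      using (DGA.dualNumber K n).one_mem
  · simpa [hU.basis_eq, sphereProj, hU.constr_ω, -Module.Basis.constr_apply_fintype]
      using (uliftBasis K).mem_gradeBy ![0, (n : ℤ)] 1
  · simp [hU.basis_eq, sphereProj, hU.constr_τ, -Module.Basis.constr_apply_fintype]
  · simp [hU.basis_eq, sphereProj, hU.constr_ω', -Module.Basis.constr_apply_fintype]

theorem sphereProj_comp_d (hU : IsSphereModel n b ω τ ω') :
    (sphereProj b : A.carrier →ₗ[K] ULift.{w} K[ε]) ∘ₗ A.d = 0 := by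
  refine b.ext fun k => ?_
  fin_cases k <;>
    simp [hU.basis_eq, A.d_one, hU.d_ω, hU.d_τ, hU.d_ω', sphereProj, hU.constr_ω',
      -Module.Basis.constr_apply_fintype]

noncomputable def proj (hU : IsSphereModel n b ω τ ω') :
    DGAHom A (DGA.dualNumber.{u, w} K n) where
  toHom := AlgHom.ofLinearMap (sphereProj b) (hU.constr_one _) hU.sphereProj_mul
  map_grade := hU.sphereProj_mem_grade
  map_d a := LinearMap.congr_fun hU.sphereProj_comp_d a

theorem sphereSection_mem_grade (hU : IsSphereModel n b ω τ ω') {i : ℤ} {x : ULift.{w} K[ε]}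
    (hx : x ∈ (DGA.dualNumber K n).grade i) : sphereSection ω x ∈ A.grade i := by
  refine (uliftBasis K).map_mem_gradeBy _ _ (fun k => ?_) hx
  fin_cases k
  · simpa [sphereSection_one] using A.one_mem
  · simpa [sphereSection_eps] using hU.ω_mem

theorem d_comp_sphereSection (hU : IsSphereModel n b ω τ ω') :
    A.d ∘ₗ sphereSection.{u, v, w} ω = 0 := by
  refine (uliftBasis K).ext fun k => ?_
  fin_cases k <;> simp [sphereSection_one, sphereSection_eps, A.d_one, hU.d_ω]

theorem sphereProj_comp_sphereSection (hU : IsSphereModel n b ω τ ω') :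
    (sphereProj b : A.carrier →ₗ[K] ULift.{w} K[ε]) ∘ₗ sphereSection ω = LinearMap.id := by
  refine (uliftBasis K).ext fun k => ?_
  fin_cases k <;>
    simp [sphereSection_one, sphereSection_eps, sphereProj, hU.constr_one, hU.constr_ω,
      -Module.Basis.constr_apply_fintype]

theorem id_eq_sphereSection_comp_add_homotopy (hU : IsSphereModel n b ω τ ω') :
    LinearMap.id = sphereSection ω ∘ₗ (sphereProj b : A.carrier →ₗ[K] ULift.{w} K[ε]) +
      A.d ∘ₗ sphereHomotopy b τ + sphereHomotopy b τ ∘ₗ A.d := by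
  refine b.ext fun k => ?_
  fin_cases k <;>
    simp [hU.basis_eq, sphereProj, sphereHomotopy, sphereSection_one, sphereSection_eps, A.d_one,
      hU.d_ω, hU.d_τ, hU.d_ω', hU.constr_one, hU.constr_ω, hU.constr_τ, hU.constr_ω',
      -Module.Basis.constr_apply_fintype]

theorem isQIso_proj (hU : IsSphereModel n b ω τ ω') : (hU.proj.{u, v, w}).IsQIso :=
  DGAHom.isQIso_of_rightInverse_of_homotopy _ (sphereSection ω) hU.sphereSection_mem_grade
    (hU.d_comp_sphereSection.trans (LinearMap.comp_zero _).symm)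
    hU.sphereProj_comp_sphereSection (sphereHomotopy b τ)
    hU.id_eq_sphereSection_comp_add_homotopy

end IsSphereModel

end SphereModel

theorem formality_spheres_stmt9_general (n : ℕ) (A : DGA ℝ)
    (ω τ ω' : A.carrier)
    (hω : ω ∈ A.grade n) (hτ : τ ∈ A.grade ((n : ℤ) - 1)) (hω' : ω' ∈ A.grade n)
    (hdω : A.d ω = 0) (hdτ : A.d τ = ω')
    (hττ : τ * τ = 0)
    (hωω : ω * ω = 0) (hωω' : ω * ω' = 0) (hω'ω' : ω' * ω' = 0)
    (hωτ : ω * τ = 0) (hτω : τ * ω = 0) (hω'τ : ω' * τ = 0) (hτω' : τ * ω' = 0)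
    (b : Module.Basis (Fin 4) ℝ A.carrier)
    (hb0 : b 0 = 1) (hb1 : b 1 = ω) (hb2 : b 2 = τ) (hb3 : b 3 = ω') :
    (∃ (H : DGA ℝ) (π : DGAHom A H),
      H.d = 0 ∧ π.toHom τ = 0 ∧ π.toHom ω' = 0 ∧ π.IsQIso) ∧ A.IsFormal := by
  have hb : ⇑b = ![1, ω, τ, ω'] := by
    ext k
    fin_cases k <;> assumption
  have hU : IsSphereModel n b ω τ ω' :=
    ⟨hb, hω, hτ, hω', hdω, hdτ, hττ, hωω, hωω', hω'ω', hωτ, hτω, hω'τ, hτω'⟩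
  exact ⟨⟨_, hU.proj, rfl, hU.constr_τ _, hU.constr_ω' _, hU.isQIso_proj⟩,
    DGA.isFormal_of_isQIso hU.proj rfl hU.isQIso_proj⟩

/-- Let `A` be the graded-commutative real dg algebra with basis
`1` (degree 0), `ω` (degree `n`, `n ≥ 2`), `τ` (degree `n − 1`) and `ω'` (degree `n`),
where the differential vanishes on the subalgebra generated by `1` and `ω`, `dτ = ω'`,
`τ·τ = 0`, `ω·ω = ω·ω' = ω'·ω' = 0` and `ω·τ = τ·ω = ω'·τ = τ·ω' = 0`.  Then the
projection `A → H(A)` killing `τ` and `ω'` is a quasi-isomorphism of dg algebras;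
hence `A` is formal. -/
theorem formality_spheres_stmt9 (n : ℕ) (hn : 2 ≤ n) (A : DGA ℝ)
    (ω τ ω' : A.carrier)
    (hω : ω ∈ A.grade n) (hτ : τ ∈ A.grade ((n : ℤ) - 1)) (hω' : ω' ∈ A.grade n)
    (hdω : A.d ω = 0) (hdτ : A.d τ = ω')
    (hττ : τ * τ = 0)
    (hωω : ω * ω = 0) (hωω' : ω * ω' = 0) (hω'ω' : ω' * ω' = 0)
    (hωτ : ω * τ = 0) (hτω : τ * ω = 0) (hω'τ : ω' * τ = 0) (hτω' : τ * ω' = 0)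
    (b : Module.Basis (Fin 4) ℝ A.carrier)
    (hb0 : b 0 = 1) (hb1 : b 1 = ω) (hb2 : b 2 = τ) (hb3 : b 3 = ω') :
    (∃ (H : DGA ℝ) (π : DGAHom A H),
      H.d = 0 ∧ π.toHom τ = 0 ∧ π.toHom ω' = 0 ∧ π.IsQIso) ∧ A.IsFormal :=
  formality_spheres_stmt9_general n A ω τ ω' hω hτ hω' hdω hdτ hττ hωω hωω' hω'ω' hωτ hτω hω'τ hτω'
    b hb0 hb1 hb2 hb3
end

section
/- Consider the quiver Q with 6 vertices H_1, H_2 (top), E_1, E_2 (middle), P_1, P_2 (bottom), arrows E_i → H_j and P_i → E_j for all i, j ∈ {1,2}, and relations identifying all paths with the same endpoints. Let C be the representation with R at every vertex and identity on every arrow (R a PID). Then the sequence 0 → C → I_{H_1} ⊕ I_{H_2} → I_{E_1} ⊕ I_{E_2} → I_{P_1} ⊕ I_{P_2} → 0, with maps given by the matrices ((h^e_{11}, −h^e_{21}),(h^e_{12}, −h^e_{22})) and ((e_{11}, −e_{21}),(−e_{12}, e_{22})), is exact. -/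
/-!
The stalk of `I_v` at `x` is `R` when `x ≤ v` and `0` otherwise, so at `x` the sequence reads
`0 → R → R^{H(x)} → R^{E(x)} → R^{P(x)} → 0`, with `H(x)`, `E(x)`, `P(x)` the strata of each
dimension lying above `x`, and the differentials take differences of coordinates. Exactness
comes down to four facts about the poset: every `x` lies below a hemisphere; below both
hemispheres it lies below an arc, and below both arcs it lies below a point; and no `x` lies
below both points. The first gives injectivity, the next two force a cocycle to be constant,
hence the image of a constant, and the last gives surjectivity.
-/

open CategoryTheory CategoryTheory.Limits

/-- The vertices of the quiver of the stratification `A₂` of the 2-sphere: two hemispheres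
`H₁, H₂`, two half-equators `E₁, E₂`, two points `P₁, P₂`. -/
inductive V2 : Type
  | H1 | H2 | E1 | E2 | P1 | P2
  deriving DecidableEq

namespace V2

/-- dimension-like rank: points < equator arcs < hemispheres. -/
def rank : V2 → ℕ
  | H1 | H2 => 2
  | E1 | E2 => 1
  | P1 | P2 => 0

/-- In `A₂` there is an arrow `a → b` (i.e. `a ⊂ closure b`) iff `a = b` or `rank a < rank b`;
identifying all parallel paths, the category of representations of the quiver with relations
is the category of functors on this preorder. -/
instance : Preorder V2 where
  le a b := a = b ∨ rank a < rank b
  le_refl a := Or.inl rfl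
  le_trans a b c hab hbc := by
    rcases hab with rfl | hab
    · exact hbc
    · rcases hbc with rfl | hbc
      · exact Or.inr hab
      · exact Or.inr (hab.trans hbc)

instance : DecidableRel (α := V2) (· ≤ ·) := fun a b =>
  inferInstanceAs (Decidable (_ ∨ _))

end V2

variable (R : Type) [CommRing R]

/-- The category of representations of the quiver with relations of `A₂`
(= functors from the preorder `V2` to `R`-modules). -/
abbrev Rep2 := V2 ⥤ ModuleCat.{0} R

/-- The representation `I_v`: the extension by zero of the constant representation on the
closure of the stratum `v`; it has stalk `R` at every vertex `x ≤ v` (identity arrows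
among those) and `0` elsewhere. -/
def IRep (v : V2) : Rep2 R where
  obj x := ModuleCat.of R (PLift (x ≤ v) → R)
  map {x y} f := ModuleCat.ofHom
    { toFun := fun g h => g ⟨(leOfHom f).trans h.down⟩
      map_add' := fun _ _ => rfl
      map_smul' := fun _ _ => rfl }

/-- The constant representation `C` (stalk `R` everywhere, identity arrows). -/
def CRep : Rep2 R := (Functor.const V2).obj (ModuleCat.of R R)

/-- The canonical generator of `Hom(I_v, I_w)` for `w ≤ v` (identity on the common stalks,
zero elsewhere). -/
def canMor {v w : V2} (h : w ≤ v) : IRep R v ⟶ IRep R w where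
  app x := ModuleCat.ofHom
    { toFun := fun g hw => g ⟨hw.down.trans h⟩
      map_add' := fun _ _ => rfl
      map_smul' := fun _ _ => rfl }

/-- The canonical (adjunction) morphism `C ⟶ I_v`. -/
def unitMor (v : V2) : CRep R ⟶ IRep R v where
  app x := ModuleCat.ofHom
    { toFun := fun r _ => r
      map_add' := fun _ _ => rfl
      map_smul' := fun _ _ => rfl }

open V2

noncomputable section

/-- first differential `I_{H₁} ⊕ I_{H₂} ⟶ I_{E₁} ⊕ I_{E₂}`, given by the matrix
`((h^e₁₁, −h^e₂₁), (h^e₁₂, −h^e₂₂))`. -/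
def d2_0 : (IRep R H1 ⊞ IRep R H2) ⟶ (IRep R E1 ⊞ IRep R E2) :=
  biprod.lift
    (biprod.desc (canMor R (by decide : (E1 : V2) ≤ H1))
      (-(canMor R (by decide : (E1 : V2) ≤ H2))))
    (biprod.desc (canMor R (by decide : (E2 : V2) ≤ H1))
      (-(canMor R (by decide : (E2 : V2) ≤ H2))))

/-- second differential `I_{E₁} ⊕ I_{E₂} ⟶ I_{P₁} ⊕ I_{P₂}`, given by the matrix
`((e₁₁, −e₂₁), (−e₁₂, e₂₂))`. -/
def d2_1 : (IRep R E1 ⊞ IRep R E2) ⟶ (IRep R P1 ⊞ IRep R P2) :=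
  biprod.lift
    (biprod.desc (canMor R (by decide : (P1 : V2) ≤ E1))
      (-(canMor R (by decide : (P1 : V2) ≤ E2))))
    (biprod.desc (-(canMor R (by decide : (P2 : V2) ≤ E1)))
      (canMor R (by decide : (P2 : V2) ≤ E2)))

/-- The augmentation `C ⟶ I_{H₁} ⊕ I_{H₂}`. -/
def aug2 : CRep R ⟶ (IRep R H1 ⊞ IRep R H2) :=
  biprod.lift (unitMor R H1) (unitMor R H2)


section FunctorBiprod

variable {R} {C : Type} [Category C] {A B S : C ⥤ ModuleCat.{0} R} {x : C}

@[simp]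
lemma biprod_fst_app_lift_apply (f : S ⟶ A) (g : S ⟶ B) (z : S.obj x) :
    (biprod.fst : A ⊞ B ⟶ A).app x ((biprod.lift f g).app x z) = f.app x z := by
  simp [← NatTrans.comp_app_apply]

@[simp]
lemma biprod_snd_app_lift_apply (f : S ⟶ A) (g : S ⟶ B) (z : S.obj x) :
    (biprod.snd : A ⊞ B ⟶ B).app x ((biprod.lift f g).app x z) = g.app x z := by
  simp [← NatTrans.comp_app_apply]

@[simp]
lemma biprod_desc_app_apply (f : A ⟶ S) (g : B ⟶ S) (z : (A ⊞ B).obj x) :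
    (biprod.desc f g).app x z =
      f.app x ((biprod.fst : A ⊞ B ⟶ A).app x z) +
        g.app x ((biprod.snd : A ⊞ B ⟶ B).app x z) := by
  simp [biprod.desc_eq]

@[simp]
lemma biprod_fst_app_inl_apply (a : A.obj x) :
    (biprod.fst : A ⊞ B ⟶ A).app x ((biprod.inl : A ⟶ A ⊞ B).app x a) = a := by
  simp [← NatTrans.comp_app_apply]

@[simp]
lemma biprod_snd_app_inl_apply (a : A.obj x) :
    (biprod.snd : A ⊞ B ⟶ B).app x ((biprod.inl : A ⟶ A ⊞ B).app x a) = 0 := by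
  simp [← NatTrans.comp_app_apply]

@[simp]
lemma biprod_fst_app_inr_apply (b : B.obj x) :
    (biprod.fst : A ⊞ B ⟶ A).app x ((biprod.inr : B ⟶ A ⊞ B).app x b) = 0 := by
  simp [← NatTrans.comp_app_apply]

@[simp]
lemma biprod_snd_app_inr_apply (b : B.obj x) :
    (biprod.snd : A ⊞ B ⟶ B).app x ((biprod.inr : B ⟶ A ⊞ B).app x b) = b := by
  simp [← NatTrans.comp_app_apply]

lemma biprod_app_ext {z w : (A ⊞ B).obj x}
    (h₁ : (biprod.fst : A ⊞ B ⟶ A).app x z = (biprod.fst : A ⊞ B ⟶ A).app x w)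
    (h₂ : (biprod.snd : A ⊞ B ⟶ B).app x z = (biprod.snd : A ⊞ B ⟶ B).app x w) :
    z = w := by
  have total (z : (A ⊞ B).obj x) :
      z = (biprod.inl : A ⟶ A ⊞ B).app x ((biprod.fst : A ⊞ B ⟶ A).app x z) +
        (biprod.inr : B ⟶ A ⊞ B).app x ((biprod.snd : A ⊞ B ⟶ B).app x z) := by
    have h := congr(($(biprod.total (X := A) (Y := B))).app x z)
    simp only [NatTrans.app_add, NatTrans.comp_app, NatTrans.id_app] at h
    exact h.symm
  rw [total z, total w, h₁, h₂]

lemma NatTrans.exact_app_of_comp_eq_zero {F G H : C ⥤ ModuleCat.{0} R} {f : F ⟶ G} {g : G ⟶ H}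
    (hfg : f ≫ g = 0) (x : C) (h : ∀ y, g.app x y = 0 → y ∈ Set.range (f.app x)) :
    Function.Exact (f.app x) (g.app x) :=
  Function.Exact.of_comp_of_mem_range
    (funext fun y => by simp [← NatTrans.comp_app_apply, hfg]) h

end FunctorBiprod

namespace V2

lemma le_H1_or_le_H2 (x : V2) : x ≤ H1 ∨ x ≤ H2 := by
  cases x <;> decide

lemma le_E1_or_le_E2 {x : V2} (h₁ : x ≤ H1) (h₂ : x ≤ H2) : x ≤ E1 ∨ x ≤ E2 := by
  cases x <;> revert h₁ h₂ <;> decide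

lemma le_P1_or_le_P2 {x : V2} (h₁ : x ≤ E1) (h₂ : x ≤ E2) : x ≤ P1 ∨ x ≤ P2 := by
  cases x <;> revert h₁ h₂ <;> decide

lemma not_le_P2_of_le_P1 {x : V2} (h : x ≤ P1) : ¬ x ≤ P2 := by
  cases x <;> revert h <;> decide

end V2

variable {R}

@[simp]
lemma unitMor_comp_canMor {v w : V2} (h : w ≤ v) : unitMor R v ≫ canMor R h = unitMor R w := rfl

@[simp]
lemma canMor_comp_canMor {u v w : V2} (h : v ≤ u) (h' : w ≤ v) :
    canMor R h ≫ canMor R h' = canMor R (h'.trans h) := rfl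

variable (R) in
lemma aug2_comp_d2_0 : aug2 R ≫ d2_0 R = 0 := by
  apply biprod.hom_ext <;> simp [aug2, d2_0]

variable (R) in
lemma d2_0_comp_d2_1 : d2_0 R ≫ d2_1 R = 0 := by
  apply biprod.hom_ext <;> apply biprod.hom_ext' <;> simp [d2_0, d2_1]

lemma IRep.biprod_obj_ext {v w x : V2} {z z' : (IRep R v ⊞ IRep R w).obj x}
    (h₁ : ∀ h : x ≤ v, (biprod.fst : IRep R v ⊞ IRep R w ⟶ _).app x z ⟨h⟩ =
      (biprod.fst : IRep R v ⊞ IRep R w ⟶ _).app x z' ⟨h⟩)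
    (h₂ : ∀ h : x ≤ w, (biprod.snd : IRep R v ⊞ IRep R w ⟶ _).app x z ⟨h⟩ =
      (biprod.snd : IRep R v ⊞ IRep R w ⟶ _).app x z' ⟨h⟩) : z = z' :=
  biprod_app_ext (funext fun ⟨h⟩ => h₁ h) (funext fun ⟨h⟩ => h₂ h)

@[simp]
lemma IRep.zero_apply {v x : V2} (h : PLift (x ≤ v)) : (0 : (IRep R v).obj x) h = 0 := rfl

def IRep.const {v x : V2} (c : R) : (IRep R v).obj x := fun _ => c

@[simp]
lemma IRep.const_apply {v x : V2} (c : R) (h : PLift (x ≤ v)) : IRep.const (R := R) c h = c := rfl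

@[simp]
lemma aug2_app_fst (x : V2) (r : R) :
    (biprod.fst : IRep R H1 ⊞ IRep R H2 ⟶ _).app x ((aug2 R).app x r) = IRep.const r :=
  biprod_fst_app_lift_apply (S := CRep R) (x := x) _ _ r

@[simp]
lemma aug2_app_snd (x : V2) (r : R) :
    (biprod.snd : IRep R H1 ⊞ IRep R H2 ⟶ _).app x ((aug2 R).app x r) = IRep.const r :=
  biprod_snd_app_lift_apply (S := CRep R) (x := x) _ _ r

@[simp]
lemma d2_0_app_fst {x : V2} (z : (IRep R H1 ⊞ IRep R H2).obj x) (h : x ≤ E1) :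
    (biprod.fst : IRep R E1 ⊞ IRep R E2 ⟶ _).app x ((d2_0 R).app x z) ⟨h⟩ =
      (biprod.fst : IRep R H1 ⊞ IRep R H2 ⟶ _).app x z ⟨h.trans (by decide)⟩ -
        (biprod.snd : IRep R H1 ⊞ IRep R H2 ⟶ _).app x z ⟨h.trans (by decide)⟩ := by
  rw [d2_0, biprod_fst_app_lift_apply, biprod_desc_app_apply, sub_eq_add_neg]; rfl

@[simp]
lemma d2_0_app_snd {x : V2} (z : (IRep R H1 ⊞ IRep R H2).obj x) (h : x ≤ E2) :
    (biprod.snd : IRep R E1 ⊞ IRep R E2 ⟶ _).app x ((d2_0 R).app x z) ⟨h⟩ =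
      (biprod.fst : IRep R H1 ⊞ IRep R H2 ⟶ _).app x z ⟨h.trans (by decide)⟩ -
        (biprod.snd : IRep R H1 ⊞ IRep R H2 ⟶ _).app x z ⟨h.trans (by decide)⟩ := by
  rw [d2_0, biprod_snd_app_lift_apply, biprod_desc_app_apply, sub_eq_add_neg]; rfl

@[simp]
lemma d2_1_app_fst {x : V2} (z : (IRep R E1 ⊞ IRep R E2).obj x) (h : x ≤ P1) :
    (biprod.fst : IRep R P1 ⊞ IRep R P2 ⟶ _).app x ((d2_1 R).app x z) ⟨h⟩ =
      (biprod.fst : IRep R E1 ⊞ IRep R E2 ⟶ _).app x z ⟨h.trans (by decide)⟩ -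
        (biprod.snd : IRep R E1 ⊞ IRep R E2 ⟶ _).app x z ⟨h.trans (by decide)⟩ := by
  rw [d2_1, biprod_fst_app_lift_apply, biprod_desc_app_apply, sub_eq_add_neg]; rfl

@[simp]
lemma d2_1_app_snd {x : V2} (z : (IRep R E1 ⊞ IRep R E2).obj x) (h : x ≤ P2) :
    (biprod.snd : IRep R P1 ⊞ IRep R P2 ⟶ _).app x ((d2_1 R).app x z) ⟨h⟩ =
      -(biprod.fst : IRep R E1 ⊞ IRep R E2 ⟶ _).app x z ⟨h.trans (by decide)⟩ +
        (biprod.snd : IRep R E1 ⊞ IRep R E2 ⟶ _).app x z ⟨h.trans (by decide)⟩ := by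
  rw [d2_1, biprod_snd_app_lift_apply, biprod_desc_app_apply]; rfl

lemma aug2_app_injective (x : V2) : Function.Injective ((aug2 R).app x) := by
  intro (r : R) (s : R) hrs
  show @Eq R r s
  rcases le_H1_or_le_H2 x with h | h
  · simpa using congr((biprod.fst : IRep R H1 ⊞ IRep R H2 ⟶ _).app x $hrs ⟨h⟩)
  · simpa using congr((biprod.snd : IRep R H1 ⊞ IRep R H2 ⟶ _).app x $hrs ⟨h⟩)

lemma exact_aug2_d2_0 (x : V2) : Function.Exact ((aug2 R).app x) ((d2_0 R).app x) := by
  refine NatTrans.exact_app_of_comp_eq_zero (aug2_comp_d2_0 R) x fun a ha => ?_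
  have hconst (h₁ : x ≤ H1) (h₂ : x ≤ H2) :
      (biprod.fst : IRep R H1 ⊞ IRep R H2 ⟶ _).app x a ⟨h₁⟩ =
        (biprod.snd : IRep R H1 ⊞ IRep R H2 ⟶ _).app x a ⟨h₂⟩ := by
    rcases le_E1_or_le_E2 h₁ h₂ with h | h
    · simpa [sub_eq_zero] using
        congr((biprod.fst : IRep R E1 ⊞ IRep R E2 ⟶ _).app x $ha ⟨h⟩)
    · simpa [sub_eq_zero] using
        congr((biprod.snd : IRep R E1 ⊞ IRep R E2 ⟶ _).app x $ha ⟨h⟩)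
  rcases le_H1_or_le_H2 x with h | h
  · exact ⟨(biprod.fst : IRep R H1 ⊞ IRep R H2 ⟶ _).app x a ⟨h⟩,
      IRep.biprod_obj_ext (fun _ => by simp) (fun h₂ => by simp [hconst h h₂])⟩
  · exact ⟨(biprod.snd : IRep R H1 ⊞ IRep R H2 ⟶ _).app x a ⟨h⟩,
      IRep.biprod_obj_ext (fun h₁ => by simp [hconst h₁ h]) (fun _ => by simp)⟩

lemma exact_d2_0_d2_1 (x : V2) : Function.Exact ((d2_0 R).app x) ((d2_1 R).app x) := by
  refine NatTrans.exact_app_of_comp_eq_zero (d2_0_comp_d2_1 R) x fun b hb => ?_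
  have hconst (h₁ : x ≤ E1) (h₂ : x ≤ E2) :
      (biprod.fst : IRep R E1 ⊞ IRep R E2 ⟶ _).app x b ⟨h₁⟩ =
        (biprod.snd : IRep R E1 ⊞ IRep R E2 ⟶ _).app x b ⟨h₂⟩ := by
    rcases le_P1_or_le_P2 h₁ h₂ with h | h
    · simpa [sub_eq_zero] using
        congr((biprod.fst : IRep R P1 ⊞ IRep R P2 ⟶ _).app x $hb ⟨h⟩)
    · simpa [neg_add_eq_zero] using
        congr((biprod.snd : IRep R P1 ⊞ IRep R P2 ⟶ _).app x $hb ⟨h⟩)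
  by_cases h₁ : x ≤ E1
  · exact ⟨(biprod.inl : IRep R H1 ⟶ IRep R H1 ⊞ IRep R H2).app x
      (IRep.const ((biprod.fst : IRep R E1 ⊞ IRep R E2 ⟶ _).app x b ⟨h₁⟩)),
      IRep.biprod_obj_ext (fun _ => by simp) (fun h₂ => by simp [hconst h₁ h₂])⟩
  by_cases h₂ : x ≤ E2
  · exact ⟨(biprod.inl : IRep R H1 ⟶ IRep R H1 ⊞ IRep R H2).app x
      (IRep.const ((biprod.snd : IRep R E1 ⊞ IRep R E2 ⟶ _).app x b ⟨h₂⟩)),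
      IRep.biprod_obj_ext (fun h => absurd h h₁) (fun _ => by simp)⟩
  · exact ⟨0, IRep.biprod_obj_ext (fun h => absurd h h₁) (fun h => absurd h h₂)⟩

lemma d2_1_app_surjective (x : V2) : Function.Surjective ((d2_1 R).app x) := by
  intro w
  by_cases h₁ : x ≤ P1
  · exact ⟨(biprod.inl : IRep R E1 ⟶ IRep R E1 ⊞ IRep R E2).app x
      (IRep.const ((biprod.fst : IRep R P1 ⊞ IRep R P2 ⟶ _).app x w ⟨h₁⟩)),
      IRep.biprod_obj_ext (fun _ => by simp) (fun h => absurd h (not_le_P2_of_le_P1 h₁))⟩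
  by_cases h₂ : x ≤ P2
  · exact ⟨(biprod.inr : IRep R E2 ⟶ IRep R E1 ⊞ IRep R E2).app x
      (IRep.const ((biprod.snd : IRep R P1 ⊞ IRep R P2 ⟶ _).app x w ⟨h₂⟩)),
      IRep.biprod_obj_ext (fun h => absurd h h₁) (fun _ => by simp)⟩
  · exact ⟨0, IRep.biprod_obj_ext (fun h => absurd h h₁) (fun h => absurd h h₂)⟩

theorem formality_spheres_stmt11_general (R : Type) [CommRing R] :
    ∀ x : V2,
      Function.Injective ((aug2 R).app x) ∧
      Function.Exact ((aug2 R).app x) ((d2_0 R).app x) ∧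
      Function.Exact ((d2_0 R).app x) ((d2_1 R).app x) ∧
      Function.Surjective ((d2_1 R).app x) := fun x =>
  ⟨aug2_app_injective x, exact_aug2_d2_0 x, exact_d2_0_d2_1 x, d2_1_app_surjective x⟩

/-- For the quiver with relations of the stratification `A₂` of `S²`
(six vertices `H₁, H₂, E₁, E₂, P₁, P₂`, arrows `E_i → H_j` and `P_i → E_j`, all parallel
paths identified) and `R` a PID, the sequence
`0 → C → I_{H₁} ⊕ I_{H₂} → I_{E₁} ⊕ I_{E₂} → I_{P₁} ⊕ I_{P₂} → 0`
with the indicated matrices of canonical morphisms is exact (exactness being checked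
stalkwise at each vertex). -/
theorem formality_spheres_stmt11 (R : Type) [CommRing R] [IsDomain R]
    [IsPrincipalIdealRing R] :
    ∀ x : V2,
      Function.Injective ((aug2 R).app x) ∧
      Function.Exact ((aug2 R).app x) ((d2_0 R).app x) ∧
      Function.Exact ((d2_0 R).app x) ((d2_1 R).app x) ∧
      Function.Surjective ((d2_1 R).app x) :=
  formality_spheres_stmt11_general R

end
end

section
/- Let R be a principal ideal domain and let E be the endomorphism dg algebra of the complex J : I_{H_1} ⊕ I_{H_2} → I_{E_1} ⊕ I_{E_2} → I_{P_1} ⊕ I_{P_2} (the resolution of the constant representation C on the quiver of the stratification A_2 of S^2). Then H^0(E) ≅ R generated by the identity, H^1(E) = 0, and H^2(E) is free of rank 1; moreover the cohomology algebra H(E) is isomorphic to R[t]/(t^2) with t in degree 2, and there is a dg algebra quasi-isomorphism H(E) → E. -/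
/-! `Hom(I_v, I_w)` is free of rank one on `canMor` when `w ≤ v` and zero otherwise, and
composition multiplies coefficients, so a morphism between two-term sums of `I`'s is a `2 × 2`
matrix over `R` and `E` becomes a complex of matrices. `E⁻¹ = 0` because no `H_j` lies below an
`E_i` and no `E_j` below a `P_i`; `E⁰` consists of triples of diagonal matrices; and the
differentials are `d⁰ = [[1, 1], [-1, -1]]` and `d¹ = [[1, -1], [-1, 1]]`. Hence a `0`-cocycle has
all six diagonal entries equal, a `1`-cocycle is a coboundary by an explicit formula, and the sum
of all entries is a functional on `E²` that kills coboundaries and is `1` on `t₀`. -/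

open CategoryTheory CategoryTheory.Limits

variable (R : Type) [CommRing R]

open V2

noncomputable section

-- The three-term complex `J : J⁰ → J¹ → J²` resolving `C`, and its endomorphism dg algebra
-- `E = End J`, with `E^m = ∏_p Hom(J^p, J^{p+m})` and differential `d f = d_J ∘ f − (−1)^m f ∘ d_J`.

/-- `J⁰ = I_{H₁} ⊕ I_{H₂}`. -/
abbrev J2_0 := IRep R H1 ⊞ IRep R H2
/-- `J¹ = I_{E₁} ⊕ I_{E₂}`. -/
abbrev J2_1 := IRep R E1 ⊞ IRep R E2
/-- `J² = I_{P₁} ⊕ I_{P₂}`. -/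
abbrev J2_2 := IRep R P1 ⊞ IRep R P2

/-- degree `−1` part of `End J`. -/
abbrev End2neg := ((J2_1 R ⟶ J2_0 R) × (J2_2 R ⟶ J2_1 R))
/-- degree `0` part of `End J`. -/
abbrev End2_0 := ((J2_0 R ⟶ J2_0 R) × (J2_1 R ⟶ J2_1 R) × (J2_2 R ⟶ J2_2 R))
/-- degree `1` part of `End J`. -/
abbrev End2_1 := ((J2_0 R ⟶ J2_1 R) × (J2_1 R ⟶ J2_2 R))
/-- degree `2` part of `End J`. -/
abbrev End2_2 := (J2_0 R ⟶ J2_2 R)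

/-- differential `E^{-1} → E^0`. -/
def D2neg : End2neg R → End2_0 R :=
  fun f => (d2_0 R ≫ f.1, f.1 ≫ d2_0 R + d2_1 R ≫ f.2, f.2 ≫ d2_1 R)
/-- differential `E^0 → E^1`. -/
def D2_0 : End2_0 R → End2_1 R :=
  fun f => (f.1 ≫ d2_0 R - d2_0 R ≫ f.2.1, f.2.1 ≫ d2_1 R - d2_1 R ≫ f.2.2)
/-- differential `E^1 → E^2`. -/
def D2_1 : End2_1 R → End2_2 R :=
  fun f => f.1 ≫ d2_1 R + d2_0 R ≫ f.2

/-- the identity of `End J`. -/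
def one2 : End2_0 R := (𝟙 _, 𝟙 _, 𝟙 _)
/-- composition product `E⁰ ⋅ E⁰ → E⁰`. -/
def mul2_00 : End2_0 R → End2_0 R → End2_0 R :=
  fun f g => (g.1 ≫ f.1, g.2.1 ≫ f.2.1, g.2.2 ≫ f.2.2)
/-- composition product `E⁰ ⋅ E¹ → E¹`. -/
def mul2_01 : End2_0 R → End2_1 R → End2_1 R :=
  fun f u => (u.1 ≫ f.2.1, u.2 ≫ f.2.2)
/-- composition product `E¹ ⋅ E⁰ → E¹`. -/
def mul2_10 : End2_1 R → End2_0 R → End2_1 R :=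
  fun u f => (f.1 ≫ u.1, f.2.1 ≫ u.2)
/-- composition product `E¹ ⋅ E¹ → E²`. -/
def mul2_11 : End2_1 R → End2_1 R → End2_2 R :=
  fun u v => v.1 ≫ u.2
/-- composition product `E⁰ ⋅ E² → E²`. -/
def mul2_02 : End2_0 R → End2_2 R → End2_2 R :=
  fun f t => t ≫ f.2.2
/-- composition product `E² ⋅ E⁰ → E²`. -/
def mul2_20 : End2_2 R → End2_0 R → End2_2 R :=
  fun t f => f.1 ≫ t

section

variable {R}

namespace IRep

variable {u v w : V2}

def coeff : (IRep R v ⟶ IRep R w) →ₗ[R] R where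
  toFun η := η.app w (fun _ => 1) ⟨le_rfl⟩
  map_add' _ _ := rfl
  map_smul' _ _ := rfl

lemma exists_eq_smul_one {x : V2} (g : (IRep R v).obj x) :
    ∃ c : R, g = c • (fun _ => 1 : PLift (x ≤ v) → R) := by
  by_cases hx : x ≤ v
  · exact ⟨g ⟨hx⟩, funext fun _ => by simp⟩
  · exact ⟨0, funext fun hx' => absurd hx'.down hx⟩

lemma app_one (η : IRep R v ⟶ IRep R w) (x : V2) :
    η.app x (fun _ => 1) = coeff η • (fun _ => 1 : PLift (x ≤ w) → R) := by
  funext ⟨hx⟩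
  exact ((congrArg (fun f => f (fun _ => (1 : R)) ⟨le_rfl⟩) (η.naturality (homOfLE hx))).symm.trans
    (mul_one _).symm)

lemma coeff_injective : Function.Injective (coeff : (IRep R v ⟶ IRep R w) → R) := by
  intro η θ h
  ext x g : 4
  obtain ⟨c, rfl⟩ := exists_eq_smul_one g
  erw [map_smul, map_smul, app_one, app_one, h]

lemma coeff_comp (η : IRep R u ⟶ IRep R v) (θ : IRep R v ⟶ IRep R w) :
    coeff (η ≫ θ) = coeff η * coeff θ := by
  change θ.app w (η.app w fun _ => 1) _ = _
  erw [app_one, map_smul]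
  rfl

@[simp] lemma coeff_id : coeff (𝟙 (IRep R v)) = 1 := rfl

@[simp] lemma coeff_canMor (h : w ≤ v) : coeff (canMor R h) = 1 := rfl

lemma coeff_eq_zero (h : ¬ w ≤ v) (η : IRep R v ⟶ IRep R w) : coeff η = 0 := by
  have h1 : (fun _ => 1 : PLift (w ≤ v) → R) = (0 : (IRep R v).obj w) :=
    funext fun hw => absurd hw.down h
  change η.app w (fun _ => 1) ⟨le_rfl⟩ = 0
  rw [h1, map_zero]
  rfl

variable {a b c d e f : V2}

def toMatrix : (IRep R a ⊞ IRep R b ⟶ IRep R c ⊞ IRep R d) →ₗ[R] Matrix (Fin 2) (Fin 2) R where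
  toFun φ := !![coeff (biprod.inl ≫ φ ≫ biprod.fst), coeff (biprod.inl ≫ φ ≫ biprod.snd);
                coeff (biprod.inr ≫ φ ≫ biprod.fst), coeff (biprod.inr ≫ φ ≫ biprod.snd)]
  map_add' φ ψ := by ext i j; fin_cases i <;> fin_cases j <;> simp
  map_smul' r φ := by ext i j; fin_cases i <;> fin_cases j <;> simp

lemma toMatrix_comp (φ : IRep R a ⊞ IRep R b ⟶ IRep R c ⊞ IRep R d)
    (χ : IRep R c ⊞ IRep R d ⟶ IRep R e ⊞ IRep R f) :
    toMatrix (φ ≫ χ) = toMatrix φ * toMatrix χ := by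
  rw [← Biprod.ofComponents_eq φ, ← Biprod.ofComponents_eq χ, Biprod.ofComponents_comp]
  simp [toMatrix, ← coeff_comp]

lemma toMatrix_injective :
    Function.Injective (toMatrix : (IRep R a ⊞ IRep R b ⟶ IRep R c ⊞ IRep R d) → _) := by
  intro φ ψ h
  rw [← Biprod.ofComponents_eq φ, ← Biprod.ofComponents_eq ψ]
  congr 1 <;> apply coeff_injective
  exacts [congrFun₂ h 0 0, congrFun₂ h 0 1, congrFun₂ h 1 0, congrFun₂ h 1 1]

@[simp] lemma toMatrix_id : toMatrix (𝟙 (IRep R a ⊞ IRep R b)) = 1 := by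
  simp [toMatrix, Matrix.one_fin_two]

lemma toMatrix_lift_desc (x : IRep R a ⟶ IRep R c) (y : IRep R b ⟶ IRep R c)
    (x' : IRep R a ⟶ IRep R d) (y' : IRep R b ⟶ IRep R d) :
    toMatrix (biprod.lift (biprod.desc x y) (biprod.desc x' y')) =
      !![coeff x, coeff x'; coeff y, coeff y'] := by
  simp [toMatrix]

lemma toMatrix_map (x : IRep R a ⟶ IRep R c) (y : IRep R b ⟶ IRep R d) :
    toMatrix (biprod.map x y) = !![coeff x, 0; 0, coeff y] := by
  simp [toMatrix]

lemma exists_toMatrix_eq (h₁ : c ≤ a) (h₂ : d ≤ a) (h₃ : c ≤ b) (h₄ : d ≤ b)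
    (M : Matrix (Fin 2) (Fin 2) R) : ∃ φ : IRep R a ⊞ IRep R b ⟶ IRep R c ⊞ IRep R d,
      toMatrix φ = M := by
  refine ⟨biprod.lift (biprod.desc (M 0 0 • canMor R h₁) (M 1 0 • canMor R h₃))
    (biprod.desc (M 0 1 • canMor R h₂) (M 1 1 • canMor R h₄)), ?_⟩
  rw [toMatrix_lift_desc, Matrix.eta_fin_two M]
  simp

lemma exists_toMatrix_eq_diag (h₁ : ¬ d ≤ a) (h₂ : ¬ c ≤ b)
    (φ : IRep R a ⊞ IRep R b ⟶ IRep R c ⊞ IRep R d) :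
    ∃ x y, toMatrix φ = !![x, 0; 0, y] := by
  refine ⟨toMatrix φ 0 0, toMatrix φ 1 1, ?_⟩
  rw [Matrix.eta_fin_two (toMatrix φ)]
  simp [toMatrix, coeff_eq_zero h₁, coeff_eq_zero h₂]

lemma eq_zero_of_forall_not_le (h₁ : ¬ c ≤ a) (h₂ : ¬ d ≤ a) (h₃ : ¬ c ≤ b) (h₄ : ¬ d ≤ b)
    (φ : IRep R a ⊞ IRep R b ⟶ IRep R c ⊞ IRep R d) : φ = 0 := by
  apply toMatrix_injective
  rw [map_zero]
  ext i j
  fin_cases i <;> fin_cases j <;> simp [toMatrix, coeff_eq_zero, *]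

end IRep

open IRep

lemma toMatrix_d2_0 : toMatrix (d2_0 R) = !![1, 1; -1, -1] := by
  simp [d2_0, toMatrix_lift_desc]

lemma toMatrix_d2_1 : toMatrix (d2_1 R) = !![1, -1; -1, 1] := by
  simp [d2_1, toMatrix_lift_desc]

lemma toMatrix_D2_0_fst (z : End2_0 R) :
    toMatrix (D2_0 R z).1 = toMatrix z.1 * !![1, 1; -1, -1] - !![1, 1; -1, -1] * toMatrix z.2.1 := by
  simp [D2_0, toMatrix_comp, toMatrix_d2_0]

lemma toMatrix_D2_0_snd (z : End2_0 R) :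
    toMatrix (D2_0 R z).2 = toMatrix z.2.1 * !![1, -1; -1, 1] - !![1, -1; -1, 1] * toMatrix z.2.2 := by
  simp [D2_0, toMatrix_comp, toMatrix_d2_1]

lemma toMatrix_D2_1 (z : End2_1 R) :
    toMatrix (D2_1 R z) = toMatrix z.1 * !![1, -1; -1, 1] + !![1, 1; -1, -1] * toMatrix z.2 := by
  simp [D2_1, toMatrix_comp, toMatrix_d2_0, toMatrix_d2_1]

lemma D2neg_eq_zero (u : End2neg R) : D2neg R u = 0 := by
  obtain ⟨u₁, u₂⟩ := u
  rw [eq_zero_of_forall_not_le (by decide) (by decide) (by decide) (by decide) u₁,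
    eq_zero_of_forall_not_le (by decide) (by decide) (by decide) (by decide) u₂]
  simp [D2neg]

lemma D2_0_one2 : D2_0 R (one2 R) = 0 := by
  simp [D2_0, one2]

lemma eq_smul_one2_of_D2_0_eq_zero {z : End2_0 R} (hz : D2_0 R z = 0) :
    z = toMatrix z.1 0 0 • one2 R := by
  obtain ⟨A, B, C⟩ := z
  obtain ⟨a₁, a₂, hA⟩ := exists_toMatrix_eq_diag (by decide) (by decide) A
  obtain ⟨b₁, b₂, hB⟩ := exists_toMatrix_eq_diag (by decide) (by decide) B
  obtain ⟨c₁, c₂, hC⟩ := exists_toMatrix_eq_diag (by decide) (by decide) C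
  have h₀ := toMatrix_D2_0_fst (A, B, C)
  have h₁ := toMatrix_D2_0_snd (A, B, C)
  simp only [hz, Prod.fst_zero, Prod.snd_zero, map_zero, hA, hB, hC] at h₀ h₁
  simp [← Matrix.ext_iff, Fin.forall_fin_two] at h₀ h₁
  obtain ⟨rfl, rfl, rfl, rfl, rfl⟩ : a₂ = a₁ ∧ b₁ = a₁ ∧ b₂ = a₁ ∧ c₁ = a₁ ∧ c₂ = a₁ := by grind
  refine Prod.ext (toMatrix_injective ?_) (Prod.ext (toMatrix_injective ?_) (toMatrix_injective ?_))
  all_goals simp [hA, hB, hC, one2, Matrix.one_fin_two]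

lemma existsUnique_sub_smul_one2_eq_D2neg {z : End2_0 R} (hz : D2_0 R z = 0) :
    ∃! r : R, ∃ u : End2neg R, z - r • one2 R = D2neg R u := by
  refine ⟨toMatrix z.1 0 0, ⟨0, ?_⟩, fun r ⟨u, hu⟩ => ?_⟩
  · rw [D2neg_eq_zero, sub_eq_zero]
    exact eq_smul_one2_of_D2_0_eq_zero hz
  · rw [D2neg_eq_zero, sub_eq_zero, eq_smul_one2_of_D2_0_eq_zero hz] at hu
    simpa [one2] using congrArg (fun w : End2_0 R => toMatrix w.1 0 0) hu.symm

lemma exists_D2_0_eq_of_D2_1_eq_zero {z : End2_1 R} (hz : D2_1 R z = 0) :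
    ∃ u : End2_0 R, z = D2_0 R u := by
  obtain ⟨U, W⟩ := z
  obtain ⟨p, q, s, t, hU⟩ : ∃ p q s t, toMatrix U = !![p, q; s, t] :=
    ⟨_, _, _, _, Matrix.eta_fin_two _⟩
  obtain ⟨p', q', s', t', hW⟩ : ∃ p q s t, toMatrix W = !![p, q; s, t] :=
    ⟨_, _, _, _, Matrix.eta_fin_two _⟩
  have h := toMatrix_D2_1 (U, W)
  rw [hz, map_zero, hU, hW] at h
  simp [← Matrix.ext_iff, Fin.forall_fin_two] at h
  refine ⟨(biprod.map (p • 𝟙 _) (-s • 𝟙 _), biprod.map 0 ((p - q) • 𝟙 _),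
    biprod.map (-p' • 𝟙 _) (q' • 𝟙 _)), Prod.ext (toMatrix_injective ?_) (toMatrix_injective ?_)⟩
  · rw [toMatrix_D2_0_fst, hU]
    simp [toMatrix_map]
    grind
  · rw [toMatrix_D2_0_snd, hW]
    simp [toMatrix_map]
    grind

/-- The generator `h^p_{11} ∈ Hom(I_{H₁}, I_{P₁}) ⊂ E²` of `H²(E)`. -/
def t0 : End2_2 R :=
  biprod.lift (biprod.desc (canMor R (by decide : (P1 : V2) ≤ H1)) 0) (biprod.desc 0 0)

lemma toMatrix_t0 : toMatrix (t0 (R := R)) = !![1, 0; 0, 0] := by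
  simp [t0, toMatrix_lift_desc]

-- The rows of `d¹` and the columns of `d⁰` sum to zero.
lemma sum_toMatrix_D2_1 (u : End2_1 R) : ∑ i, ∑ j, toMatrix (D2_1 R u) i j = 0 := by
  rw [toMatrix_D2_1, Matrix.eta_fin_two (toMatrix u.1), Matrix.eta_fin_two (toMatrix u.2)]
  simp [Fin.sum_univ_two]
  ring

lemma exists_sub_smul_t0_eq_D2_1 (z : End2_2 R) :
    ∃ u : End2_1 R, z - (∑ i, ∑ j, toMatrix z i j) • t0 = D2_1 R u := by
  obtain ⟨p, q, s, t, hz⟩ : ∃ p q s t, toMatrix z = !![p, q; s, t] :=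
    ⟨_, _, _, _, Matrix.eta_fin_two _⟩
  obtain ⟨U, hU⟩ : ∃ U : J2_0 R ⟶ J2_1 R, toMatrix U = !![0, 0; -q - t, 0] :=
    exists_toMatrix_eq (by decide) (by decide) (by decide) (by decide) _
  obtain ⟨W, hW⟩ : ∃ W : J2_1 R ⟶ J2_2 R, toMatrix W = !![-q - s - t, q; 0, 0] :=
    exists_toMatrix_eq (by decide) (by decide) (by decide) (by decide) _
  refine ⟨(U, W), toMatrix_injective ?_⟩
  rw [toMatrix_D2_1, map_sub, map_smul, toMatrix_t0, hz, hU, hW]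
  simp [Fin.sum_univ_two]
  grind

lemma existsUnique_sub_smul_t0_eq_D2_1 (z : End2_2 R) :
    ∃! r : R, ∃ u : End2_1 R, z - r • t0 = D2_1 R u := by
  refine ⟨_, exists_sub_smul_t0_eq_D2_1 z, fun r ⟨u, hu⟩ => ?_⟩
  have h := congrArg (fun φ => ∑ i, ∑ j, toMatrix φ i j) hu
  rw [sum_toMatrix_D2_1, map_sub, map_smul, toMatrix_t0] at h
  simp [Fin.sum_univ_two] at h ⊢
  linear_combination -h

end

theorem formality_spheres_stmt12_general (R : Type) [CommRing R] :
    ∃ t₀ : End2_2 R,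
      -- `H⁰(E)` is free of rank 1, generated by the identity:
      (D2_0 R (one2 R) = 0) ∧
      (∀ z : End2_0 R, D2_0 R z = 0 →
        ∃! r : R, ∃ u : End2neg R, z - r • one2 R = D2neg R u) ∧
      -- `H¹(E) = 0`:
      (∀ z : End2_1 R, D2_1 R z = 0 → ∃ u : End2_0 R, z = D2_0 R u) ∧
      -- `H²(E)` is free of rank 1, generated by `t₀`:
      (∀ z : End2_2 R, ∃! r : R, ∃ u : End2_1 R, z - r • t₀ = D2_1 R u) ∧
      -- the representatives `{id, t₀}` are closed under multiplication, so that
      -- `H(E) ≅ R[t]/(t²)` and class ↦ representative is a dg algebra quasi-isomorphism: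
      mul2_02 R (one2 R) t₀ = t₀ ∧ mul2_20 R t₀ (one2 R) = t₀ ∧
      mul2_00 R (one2 R) (one2 R) = one2 R :=
  ⟨t0, D2_0_one2, fun _ hz => existsUnique_sub_smul_one2_eq_D2neg hz,
    fun _ hz => exists_D2_0_eq_of_D2_1_eq_zero hz, existsUnique_sub_smul_t0_eq_D2_1,
    Category.comp_id _, Category.id_comp _, by simp [mul2_00, one2]⟩

/-- Let `R` be a PID and `E = End J` the endomorphism dg algebra of the
complex `J : I_{H₁} ⊕ I_{H₂} → I_{E₁} ⊕ I_{E₂} → I_{P₁} ⊕ I_{P₂}` (the resolution of the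
constant representation `C` over the quiver of `A₂`).  Then `H⁰(E) ≅ R`, generated by the
identity, `H¹(E) = 0`, and `H²(E)` is free of rank `1`; the cohomology algebra `H(E)` is
`R[t]/(t²)` with `t` of degree 2, and mapping `1 ↦ id` and `t` to a representative
`t₀ ∈ E²` defines a dg algebra quasi-isomorphism `H(E) → E` (the system of representatives
`{id, t₀}` being closed under multiplication; products of degree-2 elements land in
degree `4` where `E` vanishes, whence `t² = 0`). -/
theorem formality_spheres_stmt12 (R : Type) [CommRing R] [IsDomain R]
    [IsPrincipalIdealRing R] :
    ∃ t₀ : End2_2 R,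
      -- `H⁰(E)` is free of rank 1, generated by the identity:
      (D2_0 R (one2 R) = 0) ∧
      (∀ z : End2_0 R, D2_0 R z = 0 →
        ∃! r : R, ∃ u : End2neg R, z - r • one2 R = D2neg R u) ∧
      -- `H¹(E) = 0`:
      (∀ z : End2_1 R, D2_1 R z = 0 → ∃ u : End2_0 R, z = D2_0 R u) ∧
      -- `H²(E)` is free of rank 1, generated by `t₀`:
      (∀ z : End2_2 R, ∃! r : R, ∃ u : End2_1 R, z - r • t₀ = D2_1 R u) ∧
      -- the representatives `{id, t₀}` are closed under multiplication, so that
      -- `H(E) ≅ R[t]/(t²)` and class ↦ representative is a dg algebra quasi-isomorphism: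
      mul2_02 R (one2 R) t₀ = t₀ ∧ mul2_20 R t₀ (one2 R) = t₀ ∧
      mul2_00 R (one2 R) (one2 R) = one2 R :=
  formality_spheres_stmt12_general R

end
end

section
/- For arbitrary strata S, T of the stratification A_2 of S^2 (two points, two half-equators, two hemispheres), and every q > 0, one has Ext^q(I_S, I_T) = 0 in the category of representations of the associated quiver with relations (equivalently, in weakly constructible sheaves), where I_S corresponds to the extension by zero of the constant sheaf on the closure of S. -/
/-!
`I_w` is the coinduction `G_w R` of `R` from the vertex `w` (the module `R` at every `x ≤ w`),
and `G_w` is right adjoint to evaluation at `w`. Both functors are exact and evaluation preserves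
monomorphisms, so `G_w` sends an injective presentation `0 → N → I → N' → 0` to one of `G_w N`.
Dimension shifting along it kills `Ext^{q+1}(X, G_w N)` as soon as the stalk `X_w` is projective:
for `q = 0` because maps `X ⟶ G_w N'` lift along `G_w I ⟶ G_w N'` by adjunction. The stalk of
`I_v` at `w` is a free module.
-/

open CategoryTheory CategoryTheory.Limits

variable (R : Type) [CommRing R]

universe w

namespace CategoryTheory

variable {C D : Type*} [Category C] [Category D] {F : C ⥤ D} {G : D ⥤ C}

theorem Adjunction.exists_comp_map_eq_of_projective (adj : F ⊣ G) {X : C} [Projective (F.obj X)]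
    {I N : D} (p : I ⟶ N) [Epi p] (f : X ⟶ G.obj N) : ∃ g : X ⟶ G.obj I, g ≫ G.map p = f :=
  ⟨adj.homEquiv _ _ (Projective.factorThru ((adj.homEquiv _ _).symm f) p), by
    rw [← Adjunction.homEquiv_naturality_right, Projective.factorThru_comp, Equiv.apply_symm_apply]⟩

theorem Abelian.Ext.exists_comp_extClass_eq_of_injective [Abelian C] [HasExt.{w} C]
    {S : ShortComplex C} (hS : S.ShortExact) [Injective S.X₂] {X : C} {n : ℕ}
    (e : Ext.{w} X S.X₁ (n + 1)) : ∃ y : Ext X S.X₃ n, y.comp hS.extClass rfl = e :=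
  Ext.covariant_sequence_exact₁ X hS e (Ext.eq_zero_of_injective _) rfl

theorem Abelian.Ext.eq_zero_of_projective_leftAdjoint_obj [Abelian C] [Abelian D] [HasExt.{w} C]
    [EnoughInjectives D] (adj : F ⊣ G) [F.PreservesMonomorphisms] [PreservesFiniteColimits G]
    {X : C} [Projective (F.obj X)] {N : D} {n : ℕ} (e : Ext.{w} X (G.obj N) (n + 1)) : e = 0 := by
  have := adj.isRightAdjoint
  let S (N : D) : ShortComplex D := .mk (Injective.ι N) (cokernel.π _) (cokernel.condition _)
  have hS (N : D) : ((S N).map G).ShortExact :=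
    ShortComplex.ShortExact.map_of_exact { exact := ShortComplex.exact_cokernel _ } G
  have (N : D) : Injective ((S N).map G).X₂ := adj.map_injective _ inferInstance
  induction n generalizing N with
  | zero =>
    obtain ⟨y, rfl⟩ := Ext.exists_comp_extClass_eq_of_injective (hS N) e
    obtain ⟨f, rfl⟩ := (Ext.mk₀_bijective _ _).2 y
    obtain ⟨g, rfl⟩ := adj.exists_comp_map_eq_of_projective (S N).g f
    erw [← Ext.mk₀_comp_mk₀, Ext.comp_assoc_of_second_deg_zero, (hS N).comp_extClass,
      Ext.comp_zero]
    rfl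
  | succ n ih =>
    obtain ⟨y, rfl⟩ := Ext.exists_comp_extClass_eq_of_injective (hS N) e
    rw [show y = 0 from ih y, Ext.zero_comp]
    rfl

end CategoryTheory

def coindRep (w : V2) : ModuleCat.{0} R ⥤ Rep2 R where
  obj M :=
    { obj x := ModuleCat.of R (PLift (x ≤ w) → M)
      map f := ModuleCat.ofHom
        { toFun := fun g h => g ⟨(leOfHom f).trans h.down⟩
          map_add' := fun _ _ => rfl
          map_smul' := fun _ _ => rfl } }
  map f := { app x := ModuleCat.ofHom (f.hom.compLeft _) }

theorem IRep_eq_coindRep_obj (w : V2) : IRep R w = (coindRep R w).obj (ModuleCat.of R R) := rfl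

def coindRepUnit (X : Rep2 R) (w : V2) : X ⟶ (coindRep R w).obj (X.obj w) where
  app x := ModuleCat.ofHom
    { toFun := fun a h => X.map (homOfLE h.down) a
      map_add' := fun _ _ => by ext; simp
      map_smul' := fun _ _ => by ext; simp }
  naturality x y f := by
    ext a
    funext h
    change X.map _ (X.map f a) = X.map _ a
    rw [← ConcreteCategory.comp_apply, ← X.map_comp]
    rfl

def coindRepAdjunction (w : V2) : (evaluation V2 (ModuleCat.{0} R)).obj w ⊣ coindRep R w :=
  Adjunction.mkOfUnitCounit
    { unit :=
        { app X := coindRepUnit R X w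
          naturality X Y f := by
            ext x a
            funext h
            exact (NatTrans.naturality_apply f _ a).symm }
      counit := { app M := ModuleCat.ofHom (LinearMap.proj ⟨le_refl w⟩) }
      left_triangle := by
        ext X a
        change X.map (𝟙 w) a = a
        rw [X.map_id]
        rfl
      right_triangle := by
        ext M x g
        rfl }

instance (w : V2) : PreservesFiniteColimits (coindRep R w) :=
  preservesFiniteColimits_of_evaluation _ fun x => by
    by_cases h : x ≤ w
    · have : Unique (PLift (x ≤ w)) := uniqueOfSubsingleton ⟨h⟩
      exact preservesFiniteColimits_of_natIso (F := 𝟭 _)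
        (NatIso.ofComponents (fun M => (LinearEquiv.funUnique (PLift (x ≤ w)) R M).toModuleIso.symm)
          fun _ => rfl)
    · have : IsEmpty (PLift (x ≤ w)) := ⟨fun h' => h h'.down⟩
      have hzero : IsZero (coindRep R w ⋙ (evaluation V2 (ModuleCat.{0} R)).obj x) :=
        Functor.isZero _ fun M =>
          ModuleCat.isZero_of_subsingleton (ModuleCat.of R (PLift (x ≤ w) → M))
      exact ⟨fun J _ _ => Functor.preservesColimitsOfShape_of_isZero _ hzero J⟩

instance (v w : V2) : Projective (((evaluation V2 (ModuleCat.{0} R)).obj w).obj (IRep R v)) :=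
  ModuleCat.projective_of_free (Pi.basisFun R (PLift (w ≤ v)))

theorem formality_spheres_stmt14_general (R : Type) [CommRing R] [CategoryTheory.HasExt.{0} (Rep2 R)] :
    ∀ (v w : V2) (q : ℕ), 0 < q →
      Subsingleton (CategoryTheory.Abelian.Ext (IRep R v) (IRep R w) q) := by
  rintro v w (_ | n) hq
  · exact absurd hq (lt_irrefl 0)
  · rw [IRep_eq_coindRep_obj R w]
    exact subsingleton_of_forall_eq 0
      (Abelian.Ext.eq_zero_of_projective_leftAdjoint_obj (coindRepAdjunction R w))

/-- For arbitrary strata `S, T` of the stratification `A₂` of `S²`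
(two points, two half-equators, two hemispheres) and every `q > 0`, one has
`Ext^q (I_S, I_T) = 0` in the category of representations of the associated quiver with
relations (equivalently, in weakly constructible sheaves), where `I_S` corresponds to the
extension by zero of the constant sheaf on the closure of `S`. -/
theorem formality_spheres_stmt14 (R : Type) [CommRing R] [IsDomain R]
    [IsPrincipalIdealRing R] [CategoryTheory.HasExt.{0} (Rep2 R)] :
    ∀ (v w : V2) (q : ℕ), 0 < q →
      Subsingleton (CategoryTheory.Abelian.Ext (IRep R v) (IRep R w) q) :=
  formality_spheres_stmt14_general R
end
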